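/- Define a relation ≪ on the group Lo¹_{n+1} of lower unitriangular matrices by L₀ ≪ L₁ iff L₀^{-1}L₁ is totally positive, and L₀ ≤ L₁ iff all the relevant minors of L₀^{-1}L₁ are nonnegative. Then ≤ is transitive, and L₀ ≤ L₁ ≪ L₂ implies L₀ ≪ L₂ (and symmetrically L₀ ≪ L₁ ≤ L₂ implies L₀ ≪ L₂). -/

import Mathlib

open Matrix

/-- A lower unitriangular matrix. -/
def LowerUni {n : ℕ} (L : Matrix (Fin n) (Fin n) ℝ) : Prop :=
  (∀ i, L i i = 1) ∧ ∀ i j : Fin n, i < j → L i j = 0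

/-- Totally positive (as a lower unitriangular matrix): every minor `det(L_{i₀,i₁})`
with equal-size index sets `i₀ ≥ i₁` componentwise (in increasing order) is positive. -/
def TotPos {n : ℕ} (L : Matrix (Fin n) (Fin n) ℝ) : Prop :=
  ∀ (k : ℕ) (r c : Fin k → Fin n), StrictMono r → StrictMono c →
    (∀ m, c m ≤ r m) → 0 < (L.submatrix r c).det

/-- In the closure of the totally positive matrices: all such minors are nonnegative. -/
def TotNonneg {n : ℕ} (L : Matrix (Fin n) (Fin n) ℝ) : Prop :=
  ∀ (k : ℕ) (r c : Fin k → Fin n), StrictMono r → StrictMono c →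
    (∀ m, c m ≤ r m) → 0 ≤ (L.submatrix r c).det

/-- `L₀ ≪ L₁` iff `L₀⁻¹L₁` is totally positive. -/
def LL {n : ℕ} (L₀ L₁ : Matrix (Fin n) (Fin n) ℝ) : Prop := TotPos (L₀⁻¹ * L₁)

/-- `L₀ ≤ L₁` iff all the relevant minors of `L₀⁻¹L₁` are nonnegative. -/
def LE' {n : ℕ} (L₀ L₁ : Matrix (Fin n) (Fin n) ℝ) : Prop := TotNonneg (L₀⁻¹ * L₁)

/-!
Write `L₀⁻¹ L₂ = (L₀⁻¹ L₁) (L₁⁻¹ L₂)`. For lower triangular `A` and `B`, Cauchy–Binet expands a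
minor `det (A B)[r, c]` as `∑ det A[r, s] * det B[s, c]`, and by triangularity only the index sets
with `c ≤ s ≤ r` contribute. So the relevant minors of `A B` are sums of products of relevant
minors of `A` and `B`: nonnegativity is preserved, and if one factor is totally positive the term
`s = r` (resp. `s = c`) is strictly positive, because the unitriangular factor contributes the
minor `1` there.
-/

open Finset Function

namespace Matrix

variable {R m : Type*} [CommRing R] {k : ℕ}

open scoped Classical in
theorem sum_injective_eq_sum_strictMono_sum_perm [Fintype m] [LinearOrder m] {M : Type*}
    [AddCommMonoid M] (g : (Fin k → m) → M) :
    ∑ f : Fin k → m with Injective f, g f =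
      ∑ s : Fin k → m with StrictMono s, ∑ σ : Equiv.Perm (Fin k), g (s ∘ σ) := by
  rw [← sum_product']
  symm
  refine sum_nbij (fun p => p.1 ∘ p.2) ?_ ?_ ?_ fun _ _ => rfl
  · rintro ⟨s, σ⟩ h
    simp only [mem_product, mem_filter_univ, mem_univ, and_true] at h
    simpa using h.injective.comp σ.injective
  · rintro ⟨s, σ⟩ hs ⟨s', σ'⟩ hs' (h : s ∘ σ = s' ∘ σ')
    simp only [coe_product, coe_filter_univ, coe_univ, Set.mem_prod, Set.mem_univ,
      and_true] at hs hs'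
    have hss' : s = s' := by
      rw [← hs.range_inj hs', ← σ.surjective.range_comp, h, σ'.surjective.range_comp]
    subst hss'
    exact Prod.ext rfl (Equiv.ext fun i => hs.injective (congrFun h i))
  · intro f hf
    simp only [coe_filter_univ] at hf
    refine ⟨(f ∘ Tuple.sort f, (Tuple.sort f)⁻¹), ?_, ?_⟩
    · simpa using (Tuple.monotone_sort f).strictMono_of_injective
        (Injective.comp hf (Tuple.sort f).injective)
    · ext i
      simp

theorem det_mul_eq_sum_prod_mul_det_submatrix [Fintype m] (A : Matrix (Fin k) m R)
    (B : Matrix m (Fin k) R) :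
    (A * B).det = ∑ f : Fin k → m, (∏ i, B (f i) i) * (A.submatrix id f).det := by
  simp only [det_apply', mul_apply, prod_univ_sum, mul_sum, Fintype.piFinset_univ,
    submatrix_apply, id_eq]
  rw [sum_comm]
  refine sum_congr rfl fun f _ => sum_congr rfl fun σ _ => ?_
  rw [prod_mul_distrib]
  ring

open scoped Classical in
/-- The Cauchy–Binet formula. -/
theorem det_mul_eq_sum_strictMono [Fintype m] [LinearOrder m] (A : Matrix (Fin k) m R)
    (B : Matrix m (Fin k) R) :
    (A * B).det =
      ∑ s : Fin k → m with StrictMono s, (A.submatrix id s).det * (B.submatrix s id).det := by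
  have vanish : ∀ f : Fin k → m, ¬Injective f → (A.submatrix id f).det = 0 := by
    intro f hf
    obtain ⟨i, j, hfij, hij⟩ : ∃ i j, f i = f j ∧ i ≠ j := by
      simpa [Injective] using hf
    exact det_zero_of_column_eq hij fun l => by simp [hfij]
  rw [det_mul_eq_sum_prod_mul_det_submatrix, ← sum_filter_of_ne (p := Injective) fun f _ h => ?_,
    sum_injective_eq_sum_strictMono_sum_perm]
  · refine sum_congr rfl fun s _ => ?_
    rw [det_apply' (B.submatrix s id), mul_sum]
    refine sum_congr rfl fun σ _ => ?_
    rw [show A.submatrix id (s ∘ σ) = (A.submatrix id s).submatrix id σ from rfl, det_permute']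
    simp only [Function.comp_apply, submatrix_apply, id_eq]
    ring
  · by_contra hf
    exact h (by rw [vanish f hf, mul_zero])

theorem det_submatrix_eq_zero_of_isLowerTriangular [LinearOrder m] {A : Matrix m m R}
    (hA : A.IsLowerTriangular) {r s : Fin k → m} (hr : Monotone r) (hs : Monotone s)
    {i : Fin k} (hi : r i < s i) : (A.submatrix r s).det = 0 := by
  rw [det_apply]
  refine sum_eq_zero fun σ _ => ?_
  -- pigeonhole: `σ` cannot map the `k - i` indices `≥ i` into the `k - i - 1` indices `> i`
  obtain ⟨j, hij, hσj⟩ : ∃ j, i ≤ j ∧ σ j ≤ i := by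
    by_contra! h
    have := card_le_card_of_injOn σ (fun j hj => mem_Ioi.2 (h j (mem_Ici.1 hj)))
      σ.injective.injOn
    rw [Fin.card_Ici, Fin.card_Ioi] at this
    omega
  rw [prod_eq_zero (mem_univ j) (hA ((hr hσj).trans_lt (hi.trans_le (hs hij)))), smul_zero]

open scoped Classical in
theorem det_submatrix_mul_of_isLowerTriangular [Fintype m] [LinearOrder m] {A B : Matrix m m R}
    (hA : A.IsLowerTriangular) (hB : B.IsLowerTriangular) {r c : Fin k → m}
    (hr : StrictMono r) (hc : StrictMono c) :
    ((A * B).submatrix r c).det =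
      ∑ s : Fin k → m with StrictMono s ∧ ∀ i, c i ≤ s i ∧ s i ≤ r i,
        (A.submatrix r s).det * (B.submatrix s c).det := by
  rw [show (A * B).submatrix r c = A.submatrix r id * B.submatrix id c by ext; simp [mul_apply],
    det_mul_eq_sum_strictMono, ← filter_filter]
  simp only [submatrix_submatrix, Function.comp_id, Function.id_comp]
  refine (sum_filter_of_ne fun s hs h => ?_).symm
  rw [mem_filter_univ] at hs
  by_contra! hsrc
  obtain ⟨i, hi⟩ := hsrc
  rcases lt_or_ge (s i) (c i) with hsc | hcs
  · exact h (by rw [det_submatrix_eq_zero_of_isLowerTriangular hB hs.monotone hc.monotone hsc,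
      mul_zero])
  · exact h (by rw [det_submatrix_eq_zero_of_isLowerTriangular hA hr.monotone hs.monotone
      (hi hcs), zero_mul])

end Matrix

theorem Matrix.IsLowerTriangular.mul_apply_self {R m : Type*} [Semiring R] [Fintype m]
    [LinearOrder m] {A B : Matrix m m R} (hA : A.IsLowerTriangular) (hB : B.IsLowerTriangular)
    (i : m) : (A * B) i i = A i i * B i i := by
  refine Fintype.sum_eq_single i fun j hj => ?_
  rcases hj.lt_or_gt with hji | hij
  · exact mul_eq_zero_of_right _ (hB hji)
  · exact mul_eq_zero_of_left (hA hij) _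

namespace LowerUni

variable {N k : ℕ} {A B : Matrix (Fin N) (Fin N) ℝ}

theorem isLowerTriangular (hA : LowerUni A) : A.IsLowerTriangular :=
  fun i j h => hA.2 i j h

theorem submatrix (hA : LowerUni A) {r : Fin k → Fin N} (hr : StrictMono r) :
    LowerUni (A.submatrix r r) :=
  ⟨fun i => hA.1 (r i), fun _ _ h => hA.2 _ _ (hr h)⟩

theorem det_eq_one (hA : LowerUni A) : A.det = 1 := by
  simp [Matrix.det_of_isLowerTriangular A hA.isLowerTriangular, hA.1]

theorem mul (hA : LowerUni A) (hB : LowerUni B) : LowerUni (A * B) :=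
  ⟨fun i => by rw [hA.isLowerTriangular.mul_apply_self hB.isLowerTriangular, hA.1, hB.1, one_mul],
    fun i j h => hA.isLowerTriangular.mul hB.isLowerTriangular h⟩

theorem inv (hA : LowerUni A) : LowerUni A⁻¹ := by
  have hunit : IsUnit A.det := by simp [hA.det_eq_one]
  have : Invertible A := A.invertibleOfIsUnitDet hunit
  have hinv : A⁻¹.IsLowerTriangular := blockTriangular_inv_of_blockTriangular hA.isLowerTriangular
  refine ⟨fun i => ?_, fun i j h => hinv h⟩
  simpa [hinv.mul_apply_self hA.isLowerTriangular, hA.1] using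
    congrFun (congrFun (A.nonsing_inv_mul hunit) i) i

end LowerUni

open scoped Classical in
theorem TotNonneg.mul {N : ℕ} {A B : Matrix (Fin N) (Fin N) ℝ} (hA : A.IsLowerTriangular)
    (hB : B.IsLowerTriangular) (ha : TotNonneg A) (hb : TotNonneg B) : TotNonneg (A * B) := by
  intro k r c hr hc _
  rw [det_submatrix_mul_of_isLowerTriangular hA hB hr hc]
  refine sum_nonneg fun s hs => ?_
  obtain ⟨hs, hcsr⟩ := (mem_filter_univ _).1 hs
  exact mul_nonneg (ha k r s hr hs fun i => (hcsr i).2) (hb k s c hs hc fun i => (hcsr i).1)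

open scoped Classical in
theorem TotNonneg.mul_totPos {N : ℕ} {A B : Matrix (Fin N) (Fin N) ℝ} (hA : LowerUni A)
    (hB : B.IsLowerTriangular) (ha : TotNonneg A) (hb : TotPos B) : TotPos (A * B) := by
  intro k r c hr hc hcr
  rw [det_submatrix_mul_of_isLowerTriangular hA.isLowerTriangular hB hr hc]
  refine sum_pos' (fun s hs => ?_) ⟨r, ?_, ?_⟩
  · obtain ⟨hs, hcsr⟩ := (mem_filter_univ _).1 hs
    exact mul_nonneg (ha k r s hr hs fun i => (hcsr i).2) (hb k s c hs hc fun i => (hcsr i).1).le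
  · exact (mem_filter_univ _).2 ⟨hr, fun i => ⟨hcr i, le_rfl⟩⟩
  · rw [(hA.submatrix hr).det_eq_one, one_mul]
    exact hb k r c hr hc hcr

open scoped Classical in
theorem TotPos.mul_totNonneg {N : ℕ} {A B : Matrix (Fin N) (Fin N) ℝ} (hA : A.IsLowerTriangular)
    (hB : LowerUni B) (ha : TotPos A) (hb : TotNonneg B) : TotPos (A * B) := by
  intro k r c hr hc hcr
  rw [det_submatrix_mul_of_isLowerTriangular hA hB.isLowerTriangular hr hc]
  refine sum_pos' (fun s hs => ?_) ⟨c, ?_, ?_⟩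
  · obtain ⟨hs, hcsr⟩ := (mem_filter_univ _).1 hs
    exact mul_nonneg (ha k r s hr hs fun i => (hcsr i).2).le (hb k s c hs hc fun i => (hcsr i).1)
  · exact (mem_filter_univ _).2 ⟨hc, fun i => ⟨le_rfl, hcr i⟩⟩
  · rw [(hB.submatrix hc).det_eq_one, mul_one]
    exact ha k r c hr hc hcr

/-- `≤` is transitive; `L₀ ≤ L₁ ≪ L₂` implies `L₀ ≪ L₂`; and `L₀ ≪ L₁ ≤ L₂` implies
`L₀ ≪ L₂` (for lower unitriangular matrices). -/
theorem le_ll_trans (n : ℕ) (L₀ L₁ L₂ : Matrix (Fin (n + 1)) (Fin (n + 1)) ℝ)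
    (h₀ : LowerUni L₀) (h₁ : LowerUni L₁) (h₂ : LowerUni L₂) :
    (LE' L₀ L₁ → LE' L₁ L₂ → LE' L₀ L₂) ∧
    (LE' L₀ L₁ → LL L₁ L₂ → LL L₀ L₂) ∧
    (LL L₀ L₁ → LE' L₁ L₂ → LL L₀ L₂) := by
  have hsplit : L₀⁻¹ * L₂ = (L₀⁻¹ * L₁) * (L₁⁻¹ * L₂) := by
    rw [Matrix.mul_assoc, ← Matrix.mul_assoc L₁, mul_nonsing_inv _ (by simp [h₁.det_eq_one]),
      Matrix.one_mul]
  have h₀₁ : LowerUni (L₀⁻¹ * L₁) := h₀.inv.mul h₁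
  have h₁₂ : LowerUni (L₁⁻¹ * L₂) := h₁.inv.mul h₂
  unfold LE' LL
  rw [hsplit]
  exact ⟨fun h h' => h.mul h₀₁.isLowerTriangular h₁₂.isLowerTriangular h',
    fun h h' => h.mul_totPos h₀₁ h₁₂.isLowerTriangular h',
    fun h h' => h.mul_totNonneg h₀₁.isLowerTriangular h₁₂ h'⟩
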